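/- arXiv:1708.01517 — 7 statements merged into one kernel-verified Lean document; each statement's English description precedes it below -/
import Mathlib

section
/- Let N ≥ 1 and let x_1, …, x_N, α_1, …, α_N be real numbers with 0 < x_1 < x_2 < … < x_N and α_1 < α_2 < … < α_N. Then the N×N generalized Vandermonde matrix whose (i,j) entry is x_j^{α_i} (real power, x_j^{α_i} = exp(α_i · log x_j)) has strictly positive determinant. -/
/-!
Writing `x j = exp (t j)`, a vector `c` with `c ᵥ* M = 0` is an exponential sum
`∑ i, c i * exp (α i * s)` vanishing at the `N` points `t j`. Dividing by `exp (α 0 * s)` and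
applying Rolle's theorem lowers the number of exponents and of zeros by one, so such a sum is
identically zero and the determinant never vanishes while `α` and `t` are increasing. The
increasing `α` form a convex set, so the determinant has the sign it takes at `α i = i`, where
the matrix is the transpose of the classical Vandermonde matrix of the increasing `exp (t j)`.
-/

open Real Finset

noncomputable def expSum {n : ℕ} (c α : Fin n → ℝ) (s : ℝ) : ℝ :=
  ∑ i, c i * exp (α i * s)

section ExpSum

variable {n : ℕ}

theorem hasDerivAt_expSum (c α : Fin n → ℝ) (s : ℝ) :
    HasDerivAt (expSum c α) (expSum (c * α) α s) s := by
  refine HasDerivAt.fun_sum fun i _ => ?_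
  simpa [mul_assoc, mul_comm] using (((hasDerivAt_id s).const_mul (α i)).exp).const_mul (c i)

theorem continuous_expSum (c α : Fin n → ℝ) : Continuous (expSum c α) :=
  continuous_iff_continuousAt.mpr fun s => (hasDerivAt_expSum c α s).continuousAt

theorem expSum_sub_const (c α : Fin n → ℝ) (a s : ℝ) :
    expSum c (fun i => α i - a) s = exp (-(a * s)) * expSum c α s := by
  rw [expSum, expSum, mul_sum]
  refine sum_congr rfl fun i _ => ?_
  rw [mul_left_comm, ← exp_add]
  ring_nf

theorem expSum_succ (c α : Fin (n + 1) → ℝ) (s : ℝ) :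
    expSum c α s = c 0 * exp (α 0 * s) + expSum (fun i => c i.succ) (fun i => α i.succ) s :=
  Fin.sum_univ_succ _

end ExpSum

theorem exists_strictMono_deriv_eq_zero {f : ℝ → ℝ} (hf : Continuous f) {n : ℕ}
    {t : Fin (n + 1) → ℝ} (ht : StrictMono t) (hft : ∀ j, f (t j) = 0) :
    ∃ u : Fin n → ℝ, StrictMono u ∧ ∀ j, deriv f (u j) = 0 := by
  have rolle : ∀ j : Fin n, ∃ u ∈ Set.Ioo (t j.castSucc) (t j.succ), deriv f u = 0 := fun j =>
    exists_deriv_eq_zero (ht j.castSucc_lt_succ) hf.continuousOn (by rw [hft, hft])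
  choose u hu hdu using rolle
  refine ⟨u, fun j k hjk => ?_, hdu⟩
  calc u j < t j.succ := (hu j).2
    _ ≤ t k.castSucc := ht.monotone (Fin.succ_le_castSucc_iff.mpr hjk)
    _ < u k := (hu k).1

theorem eq_zero_of_expSum_eq_zero {n : ℕ} {c α t : Fin n → ℝ} (hα : StrictMono α)
    (ht : StrictMono t) (h : ∀ j, expSum c α (t j) = 0) : c = 0 := by
  induction n with
  | zero => exact Subsingleton.elim _ _
  | succ n ih =>
    set β : Fin (n + 1) → ℝ := fun i => α i - α 0 with hβ
    have hβt : ∀ j, expSum c β (t j) = 0 := fun j => by rw [expSum_sub_const, h, mul_zero]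
    obtain ⟨u, hu, hdu⟩ := exists_strictMono_deriv_eq_zero (continuous_expSum c β) ht hβt
    have hβ_tail : StrictMono fun i : Fin n => β i.succ := fun _ _ hij =>
      sub_lt_sub_right (hα (Fin.succ_lt_succ_iff.mpr hij)) _
    -- The derivative of `expSum c β` loses the term of exponent `β 0 = 0`.
    have htail : (fun i : Fin n => c i.succ * β i.succ) = 0 := by
      refine ih hβ_tail hu fun j => ?_
      have hderiv := hdu j
      rw [(hasDerivAt_expSum c β (u j)).deriv, expSum_succ] at hderiv
      simpa [hβ] using hderiv
    have hc_succ : ∀ i : Fin n, c i.succ = 0 := fun i =>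
      (mul_eq_zero.mp (congrFun htail i)).resolve_right (sub_ne_zero.mpr (hα i.succ_pos).ne')
    have hc_zero : c 0 = 0 := by
      have hβt0 := hβt 0
      rw [expSum_succ] at hβt0
      simpa [expSum, hc_succ, hβ] using hβt0
    funext i
    exact Fin.cases hc_zero hc_succ i

theorem det_exp_mul_ne_zero {n : ℕ} {α t : Fin n → ℝ} (hα : StrictMono α) (ht : StrictMono t) :
    (Matrix.of fun i j => exp (α i * t j)).det ≠ 0 := by
  intro hdet
  obtain ⟨c, hc, hcM⟩ := Matrix.exists_vecMul_eq_zero_iff.mpr hdet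
  exact hc (eq_zero_of_expSum_eq_zero hα ht fun j => congrFun hcM j)

theorem det_exp_natCast_mul_pos {n : ℕ} {t : Fin n → ℝ} (ht : StrictMono t) :
    0 < (Matrix.of fun i j : Fin n => exp (i * t j)).det := by
  have hvdm : (Matrix.of fun i j : Fin n => exp (i * t j)) =
      (Matrix.vandermonde fun j => exp (t j)).transpose := by
    ext i j
    simp [Matrix.vandermonde_apply, ← exp_nat_mul]
  rw [hvdm, Matrix.det_transpose, Matrix.det_vandermonde]
  exact prod_pos fun i _ => prod_pos fun j hj => sub_pos.mpr (exp_lt_exp.mpr (ht (mem_Ioi.mp hj)))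

theorem convex_setOf_strictMono {ι : Type*} [Preorder ι] :
    Convex ℝ {f : ι → ℝ | StrictMono f} := by
  intro f hf g hg a b ha hb hab i j hij
  simp only [Pi.add_apply, Pi.smul_apply, smul_eq_mul]
  rcases ha.eq_or_lt with rfl | ha
  · nlinarith [hg hij]
  · nlinarith [mul_lt_mul_of_pos_left (hf hij) ha, mul_le_mul_of_nonneg_left (hg hij).le hb]

theorem IsPreconnected.lt_of_forall_ne {X α : Type*} [TopologicalSpace X] [LinearOrder α]
    [TopologicalSpace α] [OrderClosedTopology α] {s : Set X} (hs : IsPreconnected s)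
    {f : X → α} (hf : ContinuousOn f s) {c : α} (hne : ∀ x ∈ s, f x ≠ c) {a b : X}
    (ha : a ∈ s) (hb : b ∈ s) (hfa : c < f a) : c < f b := by
  by_contra! hfb
  obtain ⟨x, hx, hfx⟩ := hs.intermediate_value hb ha hf ⟨hfb, hfa.le⟩
  exact hne x hx hfx

theorem det_exp_mul_pos {n : ℕ} {α t : Fin n → ℝ} (hα : StrictMono α) (ht : StrictMono t) :
    0 < (Matrix.of fun i j => exp (α i * t j)).det := by
  have hcont : Continuous fun β : Fin n → ℝ => (Matrix.of fun i j => exp (β i * t j)).det := by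
    fun_prop
  exact convex_setOf_strictMono.isPreconnected.lt_of_forall_ne hcont.continuousOn
    (fun β hβ => det_exp_mul_ne_zero hβ ht) (a := fun i => (i : ℝ))
    (fun _ _ hij => Nat.cast_lt.mpr hij) hα (det_exp_natCast_mul_pos ht)

theorem generalized_vandermonde_det_pos_general (N : ℕ)
    (x α : Fin N → ℝ) (hx0 : ∀ j, 0 < x j) (hx : StrictMono x) (hα : StrictMono α) :
    0 < Matrix.det (Matrix.of fun (i j : Fin N) => x j ^ α i) := by
  have hlog : StrictMono fun j => log (x j) := fun _ _ hij => log_lt_log (hx0 _) (hx hij)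
  have hexp : (Matrix.of fun (i j : Fin N) => x j ^ α i) =
      Matrix.of fun i j => exp (α i * log (x j)) := by
    ext i j
    rw [Matrix.of_apply, Matrix.of_apply, rpow_def_of_pos (hx0 j), mul_comm]
  rw [hexp]
  exact det_exp_mul_pos hα hlog

/-- Generalized Vandermonde determinant: if `0 < x 0 < x 1 < … < x (N-1)` and
`α 0 < α 1 < … < α (N-1)`, then the matrix with entries `x j ^ α i` (real powers)
has strictly positive determinant. -/
theorem generalized_vandermonde_det_pos (N : ℕ) (hN : 1 ≤ N)
    (x α : Fin N → ℝ) (hx0 : ∀ j, 0 < x j) (hx : StrictMono x) (hα : StrictMono α) :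
    0 < Matrix.det (Matrix.of fun (i j : Fin N) => x j ^ α i) :=
  generalized_vandermonde_det_pos_general N x α hx0 hx hα
end

section
/- Let 0 < h₁ < h₂ be real numbers, let N ≥ 1 and let j_1 < j_2 < … < j_N be positive integers. Then for every c = (c_1,…,c_N) ∈ ℝ^N with c ≠ 0, the function h ↦ Σ_{i=1}^N c_i · (j_i · tanh(h·j_i))^{1/2} is not identically zero on [h₁, h₂]: there exists h ∈ [h₁, h₂] such that Σ_{i=1}^N c_i ω_{j_i}(h) ≠ 0. (Equivalently, the frequency vector (ω_{j_1}(h),…,ω_{j_N}(h)) is non-degenerate on [h₁,h₂] in the sense that its image is not contained in any hyperplane through the origin.) -/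
/-!
Each `ω_a(h) = √(a tanh (h a))` with `a ≠ 0` is real analytic in `h > 0`, so a combination
vanishing on `[h₁, h₂]` vanishes on all of `(0, ∞)`. As `h → ∞`, `ω_a(h) → √a`, and since
`1 - tanh x = 2 / (e^{2x} + 1)` the deficit satisfies `e^{2hb} (√a - ω_a(h)) → √a` for `b = a` and
`→ 0` for `b < a`. Letting `h → ∞` first gives `∑ cᵢ √aᵢ = 0`; then multiplying the deficits by
`e^{2h a₀}`, with `a₀` the smallest index, isolates `c₀ √a₀ = 0`, and induction removes the rest.
-/

open Real Filter Topology Set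
open scoped ContDiff

namespace Real

theorem one_sub_tanh (x : ℝ) : 1 - tanh x = 2 / (exp (2 * x) + 1) := by
  rw [tanh_eq, exp_neg, show 2 * x = x + x by ring, exp_add]
  field_simp
  ring

theorem tanh_nonneg {x : ℝ} (hx : 0 ≤ x) : 0 ≤ tanh x := by
  rw [tanh_eq_sinh_div_cosh]
  exact div_nonneg (sinh_nonneg_iff.2 hx) (cosh_pos x).le

theorem tanh_ne_zero {x : ℝ} (hx : x ≠ 0) : tanh x ≠ 0 := by
  rw [← tanh_zero]
  exact tanh_injective.ne hx

theorem contDiff_tanh {n : WithTop ℕ∞} : ContDiff ℝ n tanh := by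
  rw [show tanh = fun x => sinh x / cosh x from funext tanh_eq_sinh_div_cosh]
  exact contDiff_sinh.div contDiff_cosh fun x => (cosh_pos x).ne'

theorem tendsto_tanh_atTop : Tendsto tanh atTop (𝓝 1) := by
  have hden : Tendsto (fun x => exp (2 * x) + 1) atTop atTop :=
    tendsto_atTop_add_const_right _ 1
      (tendsto_exp_atTop.comp (tendsto_id.const_mul_atTop two_pos))
  simpa [← one_sub_tanh] using (hden.const_div_atTop 2).const_sub 1

theorem tendsto_exp_mul_const_atTop_of_neg {c : ℝ} (hc : c < 0) :
    Tendsto (fun x => exp (x * c)) atTop (𝓝 0) :=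
  tendsto_exp_atBot.comp (tendsto_id.atTop_mul_const_of_neg hc)

end Real

theorem tendsto_exp_mul_one_sub_tanh_of_lt {a b : ℝ} (hba : b < a) :
    Tendsto (fun h => exp (2 * h * b) * (1 - tanh (h * a))) atTop (𝓝 0) := by
  have hdecay : Tendsto (fun h => 2 * exp (h * (2 * (b - a)))) atTop (𝓝 0) := by
    simpa using (tendsto_exp_mul_const_atTop_of_neg (by linarith : 2 * (b - a) < 0)).const_mul 2
  refine tendsto_of_tendsto_of_tendsto_of_le_of_le tendsto_const_nhds hdecay (fun h => ?_)
    (fun h => ?_)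
  · dsimp only
    rw [one_sub_tanh]
    positivity
  · calc exp (2 * h * b) * (1 - tanh (h * a))
        ≤ exp (2 * h * b) * (2 / exp (2 * (h * a))) := by
          rw [one_sub_tanh]
          gcongr
          linarith
      _ = 2 * exp (h * (2 * (b - a))) := by
          rw [show h * (2 * (b - a)) = 2 * h * b - 2 * (h * a) by ring, exp_sub]
          ring

theorem tendsto_exp_mul_one_sub_tanh_self {a : ℝ} (ha : 0 < a) :
    Tendsto (fun h => exp (2 * h * a) * (1 - tanh (h * a))) atTop (𝓝 2) := by
  have key : ∀ h, 2 / (1 + exp (h * -(2 * a))) = exp (2 * h * a) * (1 - tanh (h * a)) := by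
    intro h
    rw [one_sub_tanh, mul_neg, exp_neg]
    field_simp
  have hden := (tendsto_exp_mul_const_atTop_of_neg (by linarith : -(2 * a) < 0)).const_add 1
  refine Tendsto.congr key ?_
  simpa [Pi.div_def] using (tendsto_const_nhds (x := (2 : ℝ))).div hden (by norm_num)

noncomputable def waterWaveFrequency (a h : ℝ) : ℝ := √(a * tanh (h * a))

theorem tendsto_waterWaveFrequency_atTop {a : ℝ} (ha : 0 < a) :
    Tendsto (waterWaveFrequency a) atTop (𝓝 √a) := by
  have hcont : Continuous fun t => √(a * t) := by fun_prop
  have := (hcont.tendsto 1).comp (tendsto_tanh_atTop.comp (tendsto_id.atTop_mul_const ha))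
  rwa [mul_one] at this

theorem sqrt_sub_waterWaveFrequency {a h : ℝ} (ha : 0 ≤ a) (hh : 0 ≤ h) :
    √a - waterWaveFrequency a h = √a * (1 - tanh (h * a)) / (1 + √(tanh (h * a))) := by
  rw [waterWaveFrequency, sqrt_mul ha, eq_div_iff (by positivity)]
  linear_combination (-√a) * sq_sqrt (tanh_nonneg (mul_nonneg hh ha))

theorem tendsto_exp_mul_sqrt_sub_waterWaveFrequency {a b L : ℝ} (ha : 0 < a)
    (hL : Tendsto (fun h => exp (2 * h * b) * (1 - tanh (h * a))) atTop (𝓝 L)) :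
    Tendsto (fun h => exp (2 * h * b) * (√a - waterWaveFrequency a h)) atTop
      (𝓝 (√a * L / 2)) := by
  have hden : Tendsto (fun h => 1 + √(tanh (h * a))) atTop (𝓝 2) := by
    simpa [one_add_one_eq_two] using ((continuous_sqrt.tendsto 1).comp
      (tendsto_tanh_atTop.comp (tendsto_id.atTop_mul_const ha))).const_add 1
  have hev : (fun h => √a * (exp (2 * h * b) * (1 - tanh (h * a))) / (1 + √(tanh (h * a))))
      =ᶠ[atTop] fun h => exp (2 * h * b) * (√a - waterWaveFrequency a h) := by
    filter_upwards [eventually_ge_atTop 0] with h hh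
    rw [sqrt_sub_waterWaveFrequency ha.le hh]
    ring
  exact ((hL.const_mul √a).div hden two_ne_zero).congr' hev

theorem eq_zero_of_sum_mul_waterWaveFrequency_eventually_eq_zero :
    ∀ {n : ℕ} {a : Fin n → ℝ}, (∀ i, 0 < a i) → StrictMono a → ∀ {c : Fin n → ℝ},
      (∀ᶠ h in atTop, ∑ i, c i * waterWaveFrequency (a i) h = 0) → c = 0
  | 0, _, _, _, _, _ => Subsingleton.elim _ _
  | n + 1, a, ha, hmono, c, hsum => by
    have hlim_sum : ∑ i, c i * √(a i) = 0 :=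
      tendsto_nhds_unique (tendsto_finsetSum _ fun i _ =>
          (tendsto_waterWaveFrequency_atTop (ha i)).const_mul (c i))
        (tendsto_const_nhds.congr' (hsum.mono fun _ h => h.symm))
    have hdeficit : ∀ᶠ h in atTop,
        ∑ i, c i * (exp (2 * h * a 0) * (√(a i) - waterWaveFrequency (a i) h)) = 0 := by
      filter_upwards [hsum] with h hh
      simp only [mul_sub, Finset.sum_sub_distrib, mul_left_comm (c _), ← Finset.mul_sum,
        hh, hlim_sum, sub_zero, mul_zero]
    have hlim_deficit : Tendsto
        (fun h => ∑ i, c i * (exp (2 * h * a 0) * (√(a i) - waterWaveFrequency (a i) h)))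
        atTop (𝓝 (c 0 * (√(a 0) * 2 / 2) + ∑ i : Fin n, c i.succ * (√(a i.succ) * 0 / 2))) := by
      simp only [Fin.sum_univ_succ]
      exact ((tendsto_exp_mul_sqrt_sub_waterWaveFrequency (ha 0)
        (tendsto_exp_mul_one_sub_tanh_self (ha 0))).const_mul _).add
        (tendsto_finsetSum _ fun i _ => (tendsto_exp_mul_sqrt_sub_waterWaveFrequency (ha _)
          (tendsto_exp_mul_one_sub_tanh_of_lt (hmono (Fin.succ_pos i)))).const_mul _)
    have hc0 : c 0 = 0 := by
      have := tendsto_nhds_unique hlim_deficit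
        (tendsto_const_nhds.congr' (hdeficit.mono fun _ h => h.symm))
      simpa [(sqrt_pos.2 (ha 0)).ne'] using this
    have htail : c ∘ Fin.succ = 0 :=
      eq_zero_of_sum_mul_waterWaveFrequency_eventually_eq_zero (fun i => ha i.succ)
        (hmono.comp Fin.strictMono_succ) (by
          filter_upwards [hsum] with h hh
          simpa [Fin.sum_univ_succ, hc0] using hh)
    ext i
    cases i using Fin.cases with
    | zero => exact hc0
    | succ i => exact congrFun htail i

theorem analyticAt_waterWaveFrequency {a h : ℝ} (ha : a ≠ 0) (hh : h ≠ 0) :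
    AnalyticAt ℝ (waterWaveFrequency a) h := by
  have hne : a * tanh (h * a) ≠ 0 := mul_ne_zero ha (tanh_ne_zero (mul_ne_zero hh ha))
  have hsmooth : ContDiffAt ℝ ω (waterWaveFrequency a) h :=
    (contDiffAt_const.mul (contDiff_tanh.contDiffAt.comp h
      (contDiffAt_id.mul contDiffAt_const))).sqrt hne
  exact hsmooth.analyticAt

theorem AnalyticOnNhd.eventually_eq_zero_atTop_of_eqOn_Icc {f : ℝ → ℝ} {a b c : ℝ}
    (hf : AnalyticOnNhd ℝ f (Ioi a)) (hab : a < b) (hbc : b < c) (hzero : EqOn f 0 (Icc b c)) :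
    f =ᶠ[atTop] 0 := by
  have hmid : f =ᶠ[𝓝 ((b + c) / 2)] 0 :=
    mem_of_superset (Ioo_mem_nhds (by linarith) (by linarith))
      fun x hx => hzero (Ioo_subset_Icc_self hx)
  have hIoi := hf.eqOn_zero_of_preconnected_of_eventuallyEq_zero isPreconnected_Ioi
    (show (b + c) / 2 ∈ Ioi a by simp only [mem_Ioi]; linarith) hmid
  filter_upwards [eventually_gt_atTop a] with x hx using hIoi hx

theorem frequencies_nondegenerate_general (h₁ h₂ : ℝ) (hh₁ : 0 < h₁) (hh : h₁ < h₂)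
    (N : ℕ) (j : Fin N → ℕ) (hj1 : ∀ i, 1 ≤ j i) (hj : StrictMono j)
    (c : Fin N → ℝ) (hc : c ≠ 0) :
    ∃ h ∈ Set.Icc h₁ h₂,
      (∑ i, c i * Real.sqrt ((j i : ℝ) * Real.tanh (h * (j i : ℝ)))) ≠ 0 := by
  by_contra! hvanish
  have hpos : ∀ i, 0 < (j i : ℝ) := fun i => by exact_mod_cast hj1 i
  have hanalytic : AnalyticOnNhd ℝ (fun h => ∑ i, c i * waterWaveFrequency (j i) h) (Ioi 0) :=
    fun h hh => Finset.analyticAt_fun_sum _ fun i _ =>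
      analyticAt_const.mul (analyticAt_waterWaveFrequency (hpos i).ne' (ne_of_gt hh))
  exact hc <| eq_zero_of_sum_mul_waterWaveFrequency_eventually_eq_zero hpos
    (Nat.strictMono_cast.comp hj)
    (hanalytic.eventually_eq_zero_atTop_of_eqOn_Icc hh₁ hh hvanish)

/-- Non-degeneracy of the linear frequencies ω_j(h) = √(j·tanh(h·j)): for any finitely many
distinct positive integers j_1 < … < j_N and any nonzero vector c ∈ ℝ^N, the function
h ↦ Σ c_i ω_{j_i}(h) is not identically zero on [h₁, h₂]. -/
theorem frequencies_nondegenerate (h₁ h₂ : ℝ) (hh₁ : 0 < h₁) (hh : h₁ < h₂)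
    (N : ℕ) (hN : 1 ≤ N) (j : Fin N → ℕ) (hj1 : ∀ i, 1 ≤ j i) (hj : StrictMono j)
    (c : Fin N → ℝ) (hc : c ≠ 0) :
    ∃ h ∈ Set.Icc h₁ h₂,
      (∑ i, c i * Real.sqrt ((j i : ℝ) * Real.tanh (h * (j i : ℝ)))) ≠ 0 :=
  frequencies_nondegenerate_general h₁ h₂ hh₁ hh N j hj1 hj c hc
end

section
/- The function g₁ : ℝ → ℝ defined by g₁(h) := (tanh(h⁴))^{1/2} is real-analytic on the whole real line (it is the composition of analytic functions away from 0, and it admits a convergent power series expansion g₁(h) = h²·(1 + Σ_{n≥1} T_n h^{8n})^{1/2} in a neighborhood of h = 0, where Σ T_n z^{2n+1} is the Taylor series of tanh). Moreover g₁ is not a polynomial function. -/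
/-!
Away from `0`, `tanh (h ^ 4) > 0` and `g₁` is a composition of analytic functions. At `0`,
`tanh u = u * k u` with `k = dslope tanh 0` analytic and `k 0 = tanh' 0 = 1`, so
`g₁ h = h ^ 2 * √(k (h ^ 4))` near `0`, again a composition of analytic functions.
A polynomial bounded on `ℝ` is constant, whereas `0 ≤ g₁ < 1` with `g₁ 0 = 0 < g₁ 1`.
-/

open Filter
open scoped ContDiff

theorem AnalyticAt.dslope {𝕜 E : Type*} [NontriviallyNormedField 𝕜] [NormedAddCommGroup E]
    [NormedSpace 𝕜 E] {f : 𝕜 → E} {z₀ : 𝕜} (hf : AnalyticAt 𝕜 f z₀) :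
    AnalyticAt 𝕜 (dslope f z₀) z₀ :=
  let ⟨_, hp⟩ := hf
  hp.has_fpower_series_dslope_fslope.analyticAt

theorem Polynomial.degree_le_zero_of_abs_le {p : Polynomial ℝ} {C : ℝ}
    (h : ∀ x, |p.eval x| ≤ C) : p.degree ≤ 0 :=
  p.isBoundedUnder_abs_atTop_iff.1 ⟨C, eventually_map.2 (Eventually.of_forall h)⟩

namespace Real

theorem analyticAt_sqrt {x : ℝ} (hx : x ≠ 0) : AnalyticAt ℝ (√·) x :=
  (contDiffAt_sqrt (n := ω) hx).analyticAt

theorem analyticAt_tanh (x : ℝ) : AnalyticAt ℝ tanh x := by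
  rw [show tanh = fun y => sinh y / cosh y from funext tanh_eq_sinh_div_cosh]
  exact analyticAt_sinh.div analyticAt_cosh (cosh_pos x).ne'

theorem hasDerivAt_tanh (x : ℝ) : HasDerivAt tanh (1 / cosh x ^ 2) x := by
  rw [show tanh = fun y => sinh y / cosh y from funext tanh_eq_sinh_div_cosh]
  refine ((hasDerivAt_sinh x).div (hasDerivAt_cosh x) (cosh_pos x).ne').congr_deriv ?_
  rw [← cosh_sq_sub_sinh_sq x]
  ring

theorem tanh_pos {x : ℝ} (hx : 0 < x) : 0 < tanh x := by
  rw [tanh_eq_sinh_div_cosh]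
  exact div_pos (sinh_pos_iff.2 hx) (cosh_pos x)

theorem analyticAt_sqrt_comp_pow_four {f : ℝ → ℝ} (hf : AnalyticAt ℝ f 0) (hf0 : f 0 = 0)
    (hf' : deriv f 0 ≠ 0) : AnalyticAt ℝ (fun t => √(f (t ^ 4))) 0 := by
  have hfactor : ∀ t : ℝ, √(f (t ^ 4)) = t ^ 2 * √(dslope f 0 (t ^ 4)) := by
    intro t
    have h := sub_smul_dslope f 0 (t ^ 4)
    rw [sub_zero, hf0, sub_zero, smul_eq_mul] at h
    rw [← h, sqrt_mul (by positivity), show t ^ 4 = (t ^ 2) ^ 2 by ring,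
      sqrt_sq (by positivity)]
  have hk : AnalyticAt ℝ (fun t : ℝ => dslope f 0 (t ^ 4)) 0 :=
    hf.dslope.comp_of_eq (by fun_prop) (by norm_num)
  have hk0 : dslope f 0 0 ≠ 0 := by rwa [dslope_same]
  rw [funext hfactor]
  exact (analyticAt_id.pow 2).mul ((analyticAt_sqrt hk0).comp_of_eq hk (by norm_num))

theorem analyticAt_sqrt_tanh_pow_four (h : ℝ) :
    AnalyticAt ℝ (fun t : ℝ => √(tanh (t ^ 4))) h := by
  rcases eq_or_ne h 0 with rfl | hh
  · refine analyticAt_sqrt_comp_pow_four (analyticAt_tanh 0) tanh_zero ?_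
    simp [(hasDerivAt_tanh 0).deriv]
  · have htanh : AnalyticAt ℝ (fun t : ℝ => tanh (t ^ 4)) h :=
      (analyticAt_tanh _).comp (f := (· ^ 4)) (by fun_prop)
    exact (analyticAt_sqrt (tanh_pos (Even.pow_pos (by decide : Even 4) hh)).ne').comp_of_eq
      htanh rfl

end Real

open Real

/-- The function g₁(h) = √(tanh(h⁴)) is real-analytic on the whole real line, and
it is not a polynomial function. -/
theorem g1_analytic_and_not_polynomial :
    (∀ h : ℝ, AnalyticAt ℝ (fun t : ℝ => Real.sqrt (Real.tanh (t ^ 4))) h) ∧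
    ¬ ∃ p : Polynomial ℝ, ∀ h : ℝ, Real.sqrt (Real.tanh (h ^ 4)) = p.eval h := by
  refine ⟨analyticAt_sqrt_tanh_pow_four, ?_⟩
  rintro ⟨p, hp⟩
  have hbound : ∀ x, |p.eval x| ≤ 1 := fun x => by
    rw [← hp x, abs_of_nonneg (sqrt_nonneg _)]
    exact sqrt_le_one.2 (tanh_lt_one _).le
  have hconst := Polynomial.eq_C_of_degree_le_zero (Polynomial.degree_le_zero_of_abs_le hbound)
  have heval : p.eval 1 = p.eval 0 := by rw [hconst, Polynomial.eval_C, Polynomial.eval_C]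
  rw [← hp, ← hp, one_pow, zero_pow four_ne_zero, tanh_zero, sqrt_zero] at heval
  exact (sqrt_pos.2 (tanh_pos one_pos)).ne' heval
end

section
/- Let h₁ > 0. Then for all real h ≥ h₁ and all positive integers j, j', one has |(j·tanh(h·j))^{1/2} − (j'·tanh(h·j'))^{1/2}| ≥ c₁·|√j − √j'|, where c₁ := (tanh(h₁))^{1/2}. Equivalently, |ω_j(h) − ω_{j'}(h)| ≥ c₁ |j − j'| / (√j + √j'). -/
/-!
Write `ω(x) = √x · √(tanh (h x))`. For `j' < j`, replacing `tanh (h j')` by the larger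
`tanh (h j)` in `ω(j')` gives `ω(j) - ω(j') ≥ (√j - √j') · √(tanh (h j))`, and
`tanh (h j) ≥ tanh h₁` because `h j ≥ h ≥ h₁`. The second form of the bound is the first one
rewritten with `j - j' = (√j - √j') (√j + √j')`.
-/

open Real

namespace Real

theorem tanh_le_tanh {x y : ℝ} : tanh x ≤ tanh y ↔ x ≤ y := by
  rw [← artanh_le_artanh_iff ⟨neg_one_lt_tanh x, tanh_lt_one x⟩ ⟨neg_one_lt_tanh y, tanh_lt_one y⟩,
    artanh_tanh, artanh_tanh]

theorem tanh_monotone : Monotone tanh := fun _ _ ↦ tanh_le_tanh.2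

theorem abs_sub_div_sqrt_add_sqrt {x y : ℝ} (hx : 0 ≤ x) (hy : 0 ≤ y) :
    |x - y| / (√x + √y) = |√x - √y| := by
  rcases (add_nonneg (sqrt_nonneg x) (sqrt_nonneg y)).eq_or_lt with hzero | hpos
  · have hx0 : x = 0 := (sqrt_eq_zero hx).1 (by linarith [sqrt_nonneg x, sqrt_nonneg y])
    have hy0 : y = 0 := (sqrt_eq_zero hy).1 (by linarith [sqrt_nonneg x, sqrt_nonneg y])
    simp [hx0, hy0]
  · rw [div_eq_iff hpos.ne', ← abs_of_pos hpos, ← abs_mul]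
    congr 1
    linear_combination -sq_sqrt hx + sq_sqrt hy

end Real

/-- The linear frequency `ω_x(h)`, for real `x`. -/
noncomputable def linearFreq (h x : ℝ) : ℝ := √(x * tanh (h * x))

theorem linearFreq_eq_mul {h x : ℝ} (hx : 0 ≤ x) : linearFreq h x = √x * √(tanh (h * x)) :=
  sqrt_mul hx _

theorem sqrt_sub_sqrt_mul_le_linearFreq_sub {h x y : ℝ} (hh : 0 ≤ h) (hy : 0 ≤ y) (hyx : y ≤ x) :
    (√x - √y) * √(tanh (h * x)) ≤ linearFreq h x - linearFreq h y := by
  have htanh : √(tanh (h * y)) ≤ √(tanh (h * x)) :=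
    sqrt_le_sqrt (tanh_monotone (mul_le_mul_of_nonneg_left hyx hh))
  rw [linearFreq_eq_mul (hy.trans hyx), linearFreq_eq_mul hy]
  linear_combination mul_le_mul_of_nonneg_left htanh (sqrt_nonneg y)

theorem sqrt_tanh_mul_sub_le_linearFreq_sub {h₁ h x y : ℝ} (hh₁ : 0 < h₁) (hh : h₁ ≤ h)
    (hx : 1 ≤ x) (hy : 0 ≤ y) (hyx : y ≤ x) :
    √(tanh h₁) * (√x - √y) ≤ linearFreq h x - linearFreq h y := by
  have hh₀ : 0 ≤ h := hh₁.le.trans hh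
  have htanh : √(tanh h₁) ≤ √(tanh (h * x)) :=
    sqrt_le_sqrt (tanh_monotone (hh.trans (le_mul_of_one_le_right hh₀ hx)))
  calc √(tanh h₁) * (√x - √y)
      ≤ (√x - √y) * √(tanh (h * x)) := by
        rw [mul_comm]
        exact mul_le_mul_of_nonneg_left htanh (sub_nonneg.2 (sqrt_le_sqrt hyx))
    _ ≤ linearFreq h x - linearFreq h y := sqrt_sub_sqrt_mul_le_linearFreq_sub hh₀ hy hyx

theorem sqrt_tanh_mul_abs_sub_le_abs_linearFreq_sub {h₁ h : ℝ} (hh₁ : 0 < h₁) (hh : h₁ ≤ h)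
    (j j' : ℕ) : √(tanh h₁) * |√j - √j'| ≤ |linearFreq h j - linearFreq h j'| := by
  wlog hlt : j' < j generalizing j j'
  · rcases (not_lt.1 hlt).eq_or_lt with rfl | hlt'
    · simp
    · rw [abs_sub_comm, abs_sub_comm (linearFreq h _)]
      exact this j' j hlt'
  have hle : (j' : ℝ) ≤ j := by exact_mod_cast hlt.le
  rw [abs_of_nonneg (sub_nonneg.2 (sqrt_le_sqrt hle))]
  exact (sqrt_tanh_mul_sub_le_linearFreq_sub hh₁ hh (by exact_mod_cast Nat.one_le_of_lt hlt)
    (Nat.cast_nonneg j') hle).trans (le_abs_self _)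

theorem freq_difference_lower_bound_general (h₁ : ℝ) (hh₁ : 0 < h₁) (h : ℝ) (hh : h₁ ≤ h)
    (j j' : ℕ) :
    Real.sqrt (Real.tanh h₁) * |Real.sqrt j - Real.sqrt j'| ≤
      |Real.sqrt ((j : ℝ) * Real.tanh (h * (j : ℝ))) -
        Real.sqrt ((j' : ℝ) * Real.tanh (h * (j' : ℝ)))| ∧
    Real.sqrt (Real.tanh h₁) * (|(j : ℝ) - (j' : ℝ)| / (Real.sqrt j + Real.sqrt j')) ≤
      |Real.sqrt ((j : ℝ) * Real.tanh (h * (j : ℝ))) -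
        Real.sqrt ((j' : ℝ) * Real.tanh (h * (j' : ℝ)))| := by
  have key := sqrt_tanh_mul_abs_sub_le_abs_linearFreq_sub hh₁ hh j j'
  refine ⟨key, ?_⟩
  rwa [abs_sub_div_sqrt_add_sqrt (Nat.cast_nonneg j) (Nat.cast_nonneg j')]

/-- Lower bound on differences of linear frequencies:
|ω_j(h) − ω_{j'}(h)| ≥ c₁ |√j − √j'| = c₁ |j − j'|/(√j + √j'), with c₁ = √(tanh h₁),
for all h ≥ h₁ and positive integers j, j'. -/
theorem freq_difference_lower_bound (h₁ : ℝ) (hh₁ : 0 < h₁) (h : ℝ) (hh : h₁ ≤ h)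
    (j j' : ℕ) (hj : 1 ≤ j) (hj' : 1 ≤ j') :
    Real.sqrt (Real.tanh h₁) * |Real.sqrt j - Real.sqrt j'| ≤
      |Real.sqrt ((j : ℝ) * Real.tanh (h * (j : ℝ))) -
        Real.sqrt ((j' : ℝ) * Real.tanh (h * (j' : ℝ)))| ∧
    Real.sqrt (Real.tanh h₁) * (|(j : ℝ) - (j' : ℝ)| / (Real.sqrt j + Real.sqrt j')) ≤
      |Real.sqrt ((j : ℝ) * Real.tanh (h * (j : ℝ))) -
        Real.sqrt ((j' : ℝ) * Real.tanh (h * (j' : ℝ)))| :=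
  freq_difference_lower_bound_general h₁ hh₁ h hh j j'
end

section
/- (Exponentially small dependence of the linear frequencies on the depth.) For every h₁ > 0 and every k ∈ ℕ there exists a constant C_k > 0, depending only on k and h₁, such that for every integer j ≥ 1 and every real h ≥ h₁ one has |∂_h^k ( (j·tanh(h·j))^{1/2} − √j )| ≤ C_k · e^{−h·j}. In other words, writing ω_j(h) = √j + r(j,h), the remainder satisfies |∂_h^k r(j,h)| ≤ C_k e^{−h j} for all k ∈ ℕ and j ≥ 1, uniformly for h ≥ h₁. -/
/-!
With `u = e^{-2x}` one has `√(tanh x) = 1 + u P(u)`, where `P(u) = -2 / (1 + u + √(1 - u²))` is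
smooth on `(-1, 1)`. Under the substitution `u = e^{-a t}`, differentiating `u G(u)` in `t` gives
`-a u (v ↦ v G(v))'(u)`, again of the form `u G₁(u)` with `G₁` smooth. Hence the `k`-th
`h`-derivative of `√(j tanh(h j)) - √j` is `√j (-2j)^k u P_k(u)` with `u = e^{-2jh}` and `P_k`
bounded on `[0, e^{-2h₁}]`; the polynomial factor is absorbed by
`e^{-2jh} ≤ e^{-h₁ j} e^{-h j}` and `j^{k+1} e^{-h₁ j} ≤ (k+1)! / h₁^{k+1}`.
-/

open Real Set Topology
open scoped ContDiff Nat

theorem Real.tanh_eq_one_sub_exp_div (x : ℝ) :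
    tanh x = (1 - exp (-(2 * x))) / (1 + exp (-(2 * x))) := by
  have hsplit : exp (-(2 * x)) = exp (-x) * exp (-x) := by rw [← exp_add]; ring_nf
  have hinv : exp (-x) * exp x = 1 := by rw [← exp_add]; simp
  rw [tanh_eq, hsplit]
  field_simp
  linear_combination 2 * exp (-x) * hinv

noncomputable def sqrtTanhProfile (u : ℝ) : ℝ := -2 / (1 + u + √(1 - u ^ 2))

theorem sqrt_tanh_sub_one_eq {x : ℝ} (hx : 0 ≤ x) :
    √(tanh x) - 1 = exp (-(2 * x)) * sqrtTanhProfile (exp (-(2 * x))) := by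
  set u := exp (-(2 * x))
  have hu0 : 0 < u := exp_pos _
  have hu1 : u ≤ 1 := exp_le_one_iff.2 (by linarith)
  set s := √(1 - u ^ 2)
  have hs0 : 0 ≤ s := sqrt_nonneg _
  have hs2 : s ^ 2 = 1 - u ^ 2 := sq_sqrt (by nlinarith)
  have hsqrt : √(tanh x) = s / (1 + u) := by
    rw [tanh_eq_one_sub_exp_div, sqrt_eq_iff_eq_sq (div_nonneg (by linarith) (by linarith))
      (by positivity), div_pow, hs2]
    field_simp
    ring
  rw [hsqrt, sqrtTanhProfile]
  field_simp
  linear_combination hs2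

theorem contDiffOn_sqrtTanhProfile : ContDiffOn ℝ ∞ sqrtTanhProfile (Ioo (-1) 1) := by
  intro u ⟨hu₁, hu₂⟩
  have hpos : 0 < 1 - u ^ 2 := by nlinarith
  refine (contDiffAt_const.div ?_ ?_).contDiffWithinAt
  · exact (contDiffAt_const.add contDiffAt_id).add
      ((contDiffAt_const.sub (contDiffAt_id.pow 2)).sqrt hpos.ne')
  · have := sqrt_nonneg (1 - u ^ 2); linarith

noncomputable def derivMulId (G : ℝ → ℝ) : ℝ → ℝ := deriv fun v => v * G v

theorem ContDiffOn.iterate_derivMulId {G : ℝ → ℝ} {U : Set ℝ} (hU : IsOpen U)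
    (hG : ContDiffOn ℝ ∞ G U) (k : ℕ) : ContDiffOn ℝ ∞ (derivMulId^[k] G) U := by
  induction k with
  | zero => exact hG
  | succ k ih =>
    rw [Function.iterate_succ_apply']
    exact (contDiffOn_id.mul ih).deriv_of_isOpen hU le_rfl

theorem hasDerivAt_exp_mul_comp_exp {G : ℝ → ℝ} {a t : ℝ}
    (hG : DifferentiableAt ℝ G (exp (-(a * t)))) :
    HasDerivAt (fun s => exp (-(a * s)) * G (exp (-(a * s))))
      (-a * exp (-(a * t)) * derivMulId G (exp (-(a * t)))) t := by
  have hexp : HasDerivAt (fun s => exp (-(a * s))) (exp (-(a * t)) * -a) t := by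
    simpa using ((hasDerivAt_id t).const_mul a).neg.exp
  have hmul : HasDerivAt (fun v => v * G v) (derivMulId G (exp (-(a * t)))) (exp (-(a * t))) :=
    (differentiableAt_id.fun_mul hG).hasDerivAt
  refine (hmul.comp t hexp).congr_deriv ?_
  ring

theorem iteratedDeriv_exp_mul_comp_exp {G : ℝ → ℝ} {U : Set ℝ} (hU : IsOpen U)
    (hG : ContDiffOn ℝ ∞ G U) (a : ℝ) (k : ℕ) {t : ℝ} (ht : exp (-(a * t)) ∈ U) :
    iteratedDeriv k (fun s => exp (-(a * s)) * G (exp (-(a * s)))) t =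
      (-a) ^ k * exp (-(a * t)) * (derivMulId^[k] G) (exp (-(a * t))) := by
  induction k generalizing t with
  | zero => simp
  | succ k ih =>
    have hnhds : ∀ᶠ s in 𝓝 t, exp (-(a * s)) ∈ U :=
      (by fun_prop : Continuous fun s => exp (-(a * s))).continuousAt.preimage_mem_nhds
        (hU.mem_nhds ht)
    have hdiff : DifferentiableAt ℝ (derivMulId^[k] G) (exp (-(a * t))) :=
      ((hG.iterate_derivMulId hU k).differentiableOn (by simp)).differentiableAt
        (hU.mem_nhds ht)
    have heq : iteratedDeriv k (fun s => exp (-(a * s)) * G (exp (-(a * s)))) =ᶠ[𝓝 t]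
        fun s => (-a) ^ k * (exp (-(a * s)) * (derivMulId^[k] G) (exp (-(a * s)))) :=
      hnhds.mono fun s hs => (ih hs).trans (mul_assoc _ _ _)
    rw [iteratedDeriv_succ, heq.deriv_eq,
      ((hasDerivAt_exp_mul_comp_exp hdiff).const_mul ((-a) ^ k)).deriv,
      Function.iterate_succ_apply']
    ring

theorem sqrt_mul_tanh_sub_sqrt_eq {j t : ℝ} (hj : 0 ≤ j) (ht : 0 ≤ t) :
    √(j * tanh (t * j)) - √j =
      √j * (exp (-(2 * j * t)) * sqrtTanhProfile (exp (-(2 * j * t)))) := by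
  rw [sqrt_mul hj, show 2 * j * t = 2 * (t * j) by ring,
    ← sqrt_tanh_sub_one_eq (mul_nonneg ht hj)]
  ring

theorem iteratedDeriv_sqrt_mul_tanh_sub_sqrt {j t : ℝ} (hj : 0 < j) (ht : 0 < t) (k : ℕ) :
    iteratedDeriv k (fun s => √(j * tanh (s * j)) - √j) t =
      √j * ((-(2 * j)) ^ k * exp (-(2 * j * t)) *
        (derivMulId^[k] sqrtTanhProfile) (exp (-(2 * j * t)))) := by
  have heq : (fun s => √(j * tanh (s * j)) - √j) =ᶠ[𝓝 t]
      fun s => √j * (exp (-(2 * j * s)) * sqrtTanhProfile (exp (-(2 * j * s)))) :=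
    (lt_mem_nhds ht).mono fun s hs => sqrt_mul_tanh_sub_sqrt_eq hj.le hs.le
  have hmem : exp (-(2 * j * t)) ∈ Ioo (-1) 1 :=
    ⟨by linarith [exp_pos (-(2 * j * t))], exp_lt_one_iff.2 (by nlinarith)⟩
  rw [heq.iteratedDeriv_eq, iteratedDeriv_const_mul_field,
    iteratedDeriv_exp_mul_comp_exp isOpen_Ioo contDiffOn_sqrtTanhProfile _ _ hmem]

theorem pow_mul_exp_neg_mul_le {a x : ℝ} (ha : 0 < a) (hx : 0 ≤ x) (m : ℕ) :
    x ^ m * exp (-(a * x)) ≤ m ! / a ^ m := by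
  have h := pow_div_factorial_le_exp _ (mul_nonneg ha.le hx) m
  rw [div_le_iff₀ (by positivity)] at h
  rw [le_div_iff₀ (by positivity), exp_neg]
  calc x ^ m * (exp (a * x))⁻¹ * a ^ m = (a * x) ^ m * (exp (a * x))⁻¹ := by ring
    _ ≤ exp (a * x) * m ! * (exp (a * x))⁻¹ := by gcongr
    _ = m ! := by field_simp

theorem sqrt_mul_pow_mul_exp_le {x h₁ h : ℝ} (hx : 1 ≤ x) (hh₁ : 0 < h₁) (hh : h₁ ≤ h)
    (k : ℕ) :
    √x * (2 * x) ^ k * exp (-(2 * x * h)) ≤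
      2 ^ k * ((k + 1)! / h₁ ^ (k + 1)) * exp (-(h * x)) := by
  have hsqrt : √x ≤ x := sqrt_le_self_iff.2 (Or.inr hx)
  have hsplit : exp (-(2 * x * h)) ≤ exp (-(h₁ * x)) * exp (-(h * x)) := by
    rw [← exp_add]; gcongr; nlinarith
  calc √x * (2 * x) ^ k * exp (-(2 * x * h))
      ≤ x * (2 * x) ^ k * (exp (-(h₁ * x)) * exp (-(h * x))) := by gcongr
    _ = 2 ^ k * (x ^ (k + 1) * exp (-(h₁ * x))) * exp (-(h * x)) := by ring
    _ ≤ 2 ^ k * ((k + 1)! / h₁ ^ (k + 1)) * exp (-(h * x)) := by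
      gcongr; exact pow_mul_exp_neg_mul_le hh₁ (by linarith) _

/-- Exponentially small dependence of the linear frequencies on the depth: for every
h₁ > 0 and k ∈ ℕ there is C_k > 0 (depending only on k and h₁) such that
|∂_h^k (√(j tanh(h j)) − √j)| ≤ C_k e^{−h j} for all j ≥ 1 and h ≥ h₁. -/
theorem freq_asymptotic_exponentially_small (h₁ : ℝ) (hh₁ : 0 < h₁) (k : ℕ) :
    ∃ C : ℝ, 0 < C ∧ ∀ j : ℕ, 1 ≤ j → ∀ h : ℝ, h₁ ≤ h →
      |iteratedDeriv k
          (fun t : ℝ => Real.sqrt ((j : ℝ) * Real.tanh (t * (j : ℝ))) - Real.sqrt j) h| ≤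
        C * Real.exp (-(h * (j : ℝ))) := by
  set P := derivMulId^[k] sqrtTanhProfile
  have hsub : Icc 0 (exp (-(2 * h₁))) ⊆ Ioo (-1) 1 := fun v hv =>
    ⟨by linarith [hv.1], hv.2.trans_lt (exp_lt_one_iff.2 (by linarith))⟩
  obtain ⟨M, hM⟩ := isCompact_Icc.exists_bound_of_continuousOn
    ((contDiffOn_sqrtTanhProfile.iterate_derivMulId isOpen_Ioo k).continuousOn.mono hsub)
  refine ⟨2 ^ k * ((k + 1)! / h₁ ^ (k + 1)) * max M 1, by positivity, fun j hj h hh => ?_⟩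
  have hj' : (1 : ℝ) ≤ j := by exact_mod_cast hj
  set u := exp (-(2 * j * h))
  have hu : u ∈ Icc 0 (exp (-(2 * h₁))) := ⟨(exp_pos _).le, exp_le_exp.2 (by nlinarith)⟩
  have hPu : |P u| ≤ max M 1 := (hM u hu).trans (le_max_left _ _)
  rw [iteratedDeriv_sqrt_mul_tanh_sub_sqrt (by linarith) (by linarith) k]
  calc |√j * ((-(2 * j)) ^ k * u * P u)| = √j * (2 * j) ^ k * u * |P u| := by
        simp [abs_mul, abs_of_nonneg, u, (exp_pos _).le, mul_assoc]
    _ ≤ √j * (2 * j) ^ k * u * max M 1 := by gcongr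
    _ ≤ 2 ^ k * ((k + 1)! / h₁ ^ (k + 1)) * max M 1 * exp (-(h * j)) := by
      rw [mul_right_comm _ (max M 1)]
      gcongr ?_ * _
      exact sqrt_mul_pow_mul_exp_le hj' hh₁ hh k
end

section
/- (Separation of the perturbed frequencies; emptiness of the resonant sets with ℓ = 0.) Let 0 < h₁ < h₂. There exists δ > 0, depending only on h₁, with the following property. For every h ∈ [h₁,h₂], every m ∈ ℝ with |m − 1| ≤ δ, and every family of real numbers (r_j)_{j≥1} with √j·|r_j| ≤ δ for all j ≥ 1, setting μ_j := m·(j·tanh(h·j))^{1/2} + r_j, one has, for all positive integers j ≠ j': |μ_j − μ_{j'}| ≥ (c₁/8)·|√j − √j'|, where c₁ := (tanh(h₁))^{1/2}. In particular |μ_j − μ_{j'}| ≥ (c₁/(8(1+√2)))·j^{−1/4}·(j')^{−1/4} for all j ≠ j', so for every exponent d ≥ 1/4 and every γ > 0 with 4γ ≤ c₁/(8(1+√2)) there is no pair j ≠ j' with |μ_j − μ_{j'}| < 4γ·j^{−d}·(j')^{−d}. -/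
lemma my_tanh_mono {x y : ℝ} (hxy : x ≤ y) : Real.tanh x ≤ Real.tanh y := by
  rw [Real.tanh_eq_sinh_div_cosh, Real.tanh_eq_sinh_div_cosh,
    div_le_div_iff₀ (Real.cosh_pos x) (Real.cosh_pos y)]
  have h1 : Real.sinh (x - y) ≤ 0 := by
    have := Real.sinh_neg_iff (x := x - y)
    rcases lt_or_eq_of_le hxy with h | h
    · exact le_of_lt (this.mpr (by linarith))
    · simp [h]
  have h2 := Real.sinh_sub x y
  nlinarith

lemma my_tanh_pos {x : ℝ} (hx : 0 < x) : 0 < Real.tanh x := by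
  rw [Real.tanh_eq_sinh_div_cosh]
  exact div_pos (Real.sinh_pos_iff.mpr hx) (Real.cosh_pos x)

lemma aux_recip (a b : ℝ) (hb : 1 ≤ b) (hba : b < a) (h1 : b^2 + 1 ≤ a^2) :
    1/a + 1/b ≤ 6*(a - b) := by
  have ha : (0:ℝ) < a := by linarith
  have hb0 : (0:ℝ) < b := by linarith
  have key : a + b ≤ 6*(a-b)*(a*b) := by
    have e1 : 1 ≤ (a-b)*(a+b) := by nlinarith
    by_cases hc : a ≤ 2*b
    · have e2 : (a+b)^2 ≤ 6*(a*b) := by nlinarith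
      have e3 : (a+b)*1 ≤ (a+b)*((a-b)*(a+b)) :=
        mul_le_mul_of_nonneg_left e1 (by linarith)
      have e4 : (a-b)*(a+b)^2 ≤ (a-b)*(6*(a*b)) :=
        mul_le_mul_of_nonneg_left e2 (by linarith)
      nlinarith
    · push_neg at hc
      have f1 : a ≤ 2*(a-b) := by linarith
      have f2 : 1 ≤ a*b := by nlinarith
      have g1 := mul_le_mul_of_nonneg_right f1 (le_of_lt (mul_pos ha hb0))
      have g2 : a*1 ≤ a*(a*b) := mul_le_mul_of_nonneg_left f2 ha.le
      have g3 : 0 ≤ (a-b)*(a*b) := mul_nonneg (by linarith) (by positivity)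
      nlinarith
  have : 1/a + 1/b = (a+b)/(a*b) := by field_simp; ring
  rw [this, div_le_iff₀ (by positivity)]
  linarith

lemma aux_prod (a b : ℝ) (hb : 1 ≤ b) (hba : b < a) (h1 : b^2 + 1 ≤ a^2) :
    Real.sqrt 2 - 1 ≤ (a - b) * (Real.sqrt a * Real.sqrt b) := by
  have ha : (0:ℝ) < a := by linarith
  have hb0 : (0:ℝ) < b := by linarith
  set r := Real.sqrt 2 with hr
  have hr2 : r * r = 2 := Real.mul_self_sqrt (by norm_num)
  have hr1 : 1 < r := by nlinarith [Real.sqrt_nonneg 2]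
  have hA : Real.sqrt b ≤ Real.sqrt a := Real.sqrt_le_sqrt (le_of_lt hba)
  have hB1 : 1 ≤ Real.sqrt b := by
    rw [show (1:ℝ) = Real.sqrt 1 by simp]; exact Real.sqrt_le_sqrt hb
  have hsab : Real.sqrt a * Real.sqrt b = Real.sqrt (a*b) := by
    rw [Real.sqrt_mul ha.le]
  by_cases hc : a^2 ≤ 2*b^2
  · have hab : a ≤ r * b := by
      by_contra hcon
      push_neg at hcon
      nlinarith [mul_pos (show (0:ℝ) < a - r*b by linarith)
        (show (0:ℝ) < a + r*b by nlinarith)]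
    have hbs : b ≤ Real.sqrt (a*b) :=
      (Real.le_sqrt hb0.le (by positivity)).mpr (by nlinarith)
    have e1 : 1 ≤ (a-b)*(a+b) := by nlinarith
    have e2 : a + b ≤ (1+r) * Real.sqrt (a*b) := by nlinarith
    have e3 : (a-b)*(a+b) ≤ (a-b)*((1+r)*Real.sqrt (a*b)) :=
      mul_le_mul_of_nonneg_left e2 (by linarith)
    have e4 : (r-1)*(1+r) = 1 := by nlinarith
    nlinarith [Real.sqrt_nonneg (a*b)]
  · push_neg at hc
    have hab : r * b ≤ a := by nlinarith
    have hs1 : 1 ≤ Real.sqrt a * Real.sqrt b := by nlinarith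
    nlinarith

set_option maxHeartbeats 2000000 in
/-- Separation of the perturbed frequencies μ_j = m·√(j tanh(h j)) + r_j: for δ small
(depending only on h₁), if |m−1| ≤ δ and √j|r_j| ≤ δ, then for j ≠ j' one has
|μ_j − μ_{j'}| ≥ (c₁/8)|√j − √j'| with c₁ = √(tanh h₁); in particular
|μ_j − μ_{j'}| ≥ (c₁/(8(1+√2))) j^{−1/4} j'^{−1/4}, so no pair j ≠ j' satisfies
|μ_j − μ_{j'}| < 4γ j^{−d} j'^{−d} when d ≥ 1/4 and 4γ ≤ c₁/(8(1+√2)). -/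
theorem perturbed_frequencies_separation (h₁ h₂ : ℝ) (hh₁ : 0 < h₁) (hh : h₁ < h₂) :
    ∃ δ : ℝ, 0 < δ ∧ ∀ h ∈ Set.Icc h₁ h₂, ∀ m : ℝ, |m - 1| ≤ δ →
      ∀ r : ℕ → ℝ, (∀ j : ℕ, 1 ≤ j → Real.sqrt j * |r j| ≤ δ) →
      ∀ j j' : ℕ, 1 ≤ j → 1 ≤ j' → j ≠ j' →
        (Real.sqrt (Real.tanh h₁) / 8) * |Real.sqrt j - Real.sqrt j'| ≤
          |(m * Real.sqrt ((j : ℝ) * Real.tanh (h * (j : ℝ))) + r j) -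
            (m * Real.sqrt ((j' : ℝ) * Real.tanh (h * (j' : ℝ))) + r j')| ∧
        (Real.sqrt (Real.tanh h₁) / (8 * (1 + Real.sqrt 2))) *
            ((j : ℝ) ^ (-(1 / 4) : ℝ) * (j' : ℝ) ^ (-(1 / 4) : ℝ)) ≤
          |(m * Real.sqrt ((j : ℝ) * Real.tanh (h * (j : ℝ))) + r j) -
            (m * Real.sqrt ((j' : ℝ) * Real.tanh (h * (j' : ℝ))) + r j')| ∧
        (∀ d γ : ℝ, 1 / 4 ≤ d → 0 < γ →
          4 * γ ≤ Real.sqrt (Real.tanh h₁) / (8 * (1 + Real.sqrt 2)) →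
          ¬ (|(m * Real.sqrt ((j : ℝ) * Real.tanh (h * (j : ℝ))) + r j) -
              (m * Real.sqrt ((j' : ℝ) * Real.tanh (h * (j' : ℝ))) + r j')| <
            4 * γ * ((j : ℝ) ^ (-d) * (j' : ℝ) ^ (-d)))) := by
  have hc : 0 < Real.sqrt (Real.tanh h₁) := Real.sqrt_pos.mpr (my_tanh_pos hh₁)
  set c := Real.sqrt (Real.tanh h₁) with hcdef
  set δ := min ((1:ℝ)/2) (c/16) with hδdef
  have hδ2 : δ ≤ 1/2 := min_le_left _ _
  have hδc : δ ≤ c/16 := min_le_right _ _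
  have hδ0 : 0 < δ := lt_min (by norm_num) (by positivity)
  refine ⟨δ, hδ0, ?_⟩
  intro h hmem m hm r hr
  obtain ⟨hh1le, hh2le⟩ := hmem
  have hm1 : 1 - δ ≤ m := by
    have := (abs_le.mp hm).1; linarith
  have hm0 : 0 ≤ m := by linarith
  -- quarter-power rewriting
  have hpow : ∀ p : ℕ, 1 ≤ p →
      (p:ℝ) ^ (-(1/4) : ℝ) = (Real.sqrt (Real.sqrt (p:ℝ)))⁻¹ := by
    intro p hp
    rw [Real.rpow_neg (by positivity), show ((1:ℝ)/4) = 1/2 * (1/2) from by norm_num,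
      Real.rpow_mul (by positivity), ← Real.sqrt_eq_rpow, ← Real.sqrt_eq_rpow]
  -- main ordered key estimate
  have key : ∀ p q : ℕ, 1 ≤ q → q < p →
      c / 8 * (Real.sqrt p - Real.sqrt q) ≤
        |(m * Real.sqrt ((p : ℝ) * Real.tanh (h * (p : ℝ))) + r p) -
          (m * Real.sqrt ((q : ℝ) * Real.tanh (h * (q : ℝ))) + r q)| ∧
      (Real.sqrt 2 - 1) * ((p:ℝ) ^ (-(1/4) : ℝ) * (q:ℝ) ^ (-(1/4) : ℝ)) ≤
        Real.sqrt p - Real.sqrt q := by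
    intro p q hq hpq
    have hq1 : (1:ℝ) ≤ (q:ℝ) := by exact_mod_cast hq
    have hqp : (q:ℝ) + 1 ≤ (p:ℝ) := by exact_mod_cast hpq
    have hp1 : (1:ℝ) ≤ (p:ℝ) := by linarith
    set a := Real.sqrt (p:ℝ) with hadef
    set b := Real.sqrt (q:ℝ) with hbdef
    have hb1 : (1:ℝ) ≤ b := (Real.le_sqrt zero_le_one (by positivity)).mpr (by simpa using hq1)
    have hba : b < a := Real.sqrt_lt_sqrt (by positivity) (by linarith)
    have ha2 : a^2 = (p:ℝ) := Real.sq_sqrt (by positivity)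
    have hb2 : b^2 = (q:ℝ) := Real.sq_sqrt (by positivity)
    have h1 : b^2 + 1 ≤ a^2 := by rw [ha2, hb2]; linarith
    have ha0 : (0:ℝ) < a := by linarith
    have hb0 : (0:ℝ) < b := by linarith
    constructor
    · -- tanh estimates
      have hhpos : 0 < h := lt_of_lt_of_le hh₁ hh1le
      have htq : Real.tanh h₁ ≤ Real.tanh (h * (q:ℝ)) := my_tanh_mono (by nlinarith)
      have htpq : Real.tanh (h * (q:ℝ)) ≤ Real.tanh (h * (p:ℝ)) := my_tanh_mono (by nlinarith)
      have hsq : c ≤ Real.sqrt (Real.tanh (h * (q:ℝ))) := Real.sqrt_le_sqrt htq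
      have hsp : Real.sqrt (Real.tanh (h * (q:ℝ))) ≤ Real.sqrt (Real.tanh (h * (p:ℝ))) :=
        Real.sqrt_le_sqrt htpq
      have homp : Real.sqrt ((p:ℝ) * Real.tanh (h * (p:ℝ)))
          = a * Real.sqrt (Real.tanh (h * (p:ℝ))) := Real.sqrt_mul (by positivity) _
      have homq : Real.sqrt ((q:ℝ) * Real.tanh (h * (q:ℝ)))
          = b * Real.sqrt (Real.tanh (h * (q:ℝ))) := Real.sqrt_mul (by positivity) _
      have hsep : (a - b) * c ≤ Real.sqrt ((p:ℝ) * Real.tanh (h * (p:ℝ)))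
          - Real.sqrt ((q:ℝ) * Real.tanh (h * (q:ℝ))) := by
        rw [homp, homq]
        nlinarith [mul_nonneg ha0.le (sub_nonneg.mpr hsp),
          mul_le_mul_of_nonneg_left hsq (show (0:ℝ) ≤ a - b by linarith)]
      -- r estimates
      have h5 := hr p (by omega)
      have h6 := hr q (by omega)
      rw [← hadef] at h5
      rw [← hbdef] at h6
      have t1 : |r p| ≤ δ / a := by
        rw [le_div_iff₀ ha0]; nlinarith [abs_nonneg (r p)]
      have t2 : |r q| ≤ δ / b := by
        rw [le_div_iff₀ hb0]; nlinarith [abs_nonneg (r q)]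
      have t3 : |r p - r q| ≤ |r p| + |r q| := abs_sub (r p) (r q)
      have hrecip := aux_recip a b hb1 hba h1
      have habs : |r p - r q| ≤ δ * (6 * (a - b)) := by
        have e1 : δ / a + δ / b = δ * (1/a + 1/b) := by ring
        have e2 : δ * (1/a + 1/b) ≤ δ * (6 * (a - b)) :=
          mul_le_mul_of_nonneg_left hrecip hδ0.le
        linarith
      -- combine
      set D := (m * Real.sqrt ((p : ℝ) * Real.tanh (h * (p : ℝ))) + r p) -
          (m * Real.sqrt ((q : ℝ) * Real.tanh (h * (q : ℝ))) + r q) with hDdef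
      have hmω : (1 - δ) * ((a - b) * c) ≤ m * (Real.sqrt ((p:ℝ) * Real.tanh (h * (p:ℝ)))
          - Real.sqrt ((q:ℝ) * Real.tanh (h * (q:ℝ)))) :=
        mul_le_mul hm1 hsep (by nlinarith) hm0
      have coeff : c/8 ≤ (1 - δ) * c - 6 * δ := by
        nlinarith [mul_le_mul_of_nonneg_right hδ2 hc.le]
      have hDlow : m * (Real.sqrt ((p:ℝ) * Real.tanh (h * (p:ℝ)))
          - Real.sqrt ((q:ℝ) * Real.tanh (h * (q:ℝ)))) - |r p - r q| ≤ D := by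
        have := neg_abs_le (r p - r q)
        rw [hDdef]; ring_nf; ring_nf at this ⊢; nlinarith [this]
      have hDabs : D ≤ |D| := le_abs_self D
      nlinarith [mul_le_mul_of_nonneg_right coeff (show (0:ℝ) ≤ a - b by linarith)]
    · -- quarter-power separation
      have hprod := aux_prod a b hb1 hba h1
      rw [hpow p (by omega), hpow q (by omega), ← hadef, ← hbdef]
      have hsa : (0:ℝ) < Real.sqrt a := Real.sqrt_pos.mpr ha0
      have hsb : (0:ℝ) < Real.sqrt b := Real.sqrt_pos.mpr hb0
      have hr1 : 1 ≤ Real.sqrt 2 := by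
        rw [show (1:ℝ) = Real.sqrt 1 from by simp]
        exact Real.sqrt_le_sqrt (by norm_num)
      rw [← mul_inv, mul_comm (Real.sqrt a) (Real.sqrt b), ← div_eq_mul_inv,
        div_le_iff₀ (by positivity)]
      nlinarith
  -- symmetric versions of the two bounds
  intro j j' hj hj' hne
  have C2nonneg : (0:ℝ) ≤ c / (8 * (1 + Real.sqrt 2)) := by positivity
  have cconst : c / (8 * (1 + Real.sqrt 2)) = c / 8 * (Real.sqrt 2 - 1) := by
    have h2 : Real.sqrt 2 * Real.sqrt 2 = 2 := Real.mul_self_sqrt (by norm_num)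
    have hpos : (0:ℝ) < 1 + Real.sqrt 2 := by positivity
    field_simp
    nlinarith
  have main2 : (c / 8) * |Real.sqrt j - Real.sqrt j'| ≤
        |(m * Real.sqrt ((j : ℝ) * Real.tanh (h * (j : ℝ))) + r j) -
          (m * Real.sqrt ((j' : ℝ) * Real.tanh (h * (j' : ℝ))) + r j')| ∧
      (c / (8 * (1 + Real.sqrt 2))) * ((j:ℝ) ^ (-(1/4) : ℝ) * (j':ℝ) ^ (-(1/4) : ℝ)) ≤
        |(m * Real.sqrt ((j : ℝ) * Real.tanh (h * (j : ℝ))) + r j) -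
          (m * Real.sqrt ((j' : ℝ) * Real.tanh (h * (j' : ℝ))) + r j')| := by
    rcases lt_or_gt_of_ne hne with hlt | hlt
    · obtain ⟨K1, K2⟩ := key j' j hj hlt
      have habseq : |Real.sqrt j - Real.sqrt j'| = Real.sqrt j' - Real.sqrt j := by
        rw [abs_sub_comm, abs_of_nonneg]
        have : Real.sqrt (j:ℝ) ≤ Real.sqrt (j':ℝ) :=
          Real.sqrt_le_sqrt (by exact_mod_cast hlt.le)
        linarith
      rw [abs_sub_comm ((m * Real.sqrt ((j : ℝ) * Real.tanh (h * (j : ℝ))) + r j)), habseq]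
      constructor
      · exact K1
      · calc (c / (8 * (1 + Real.sqrt 2))) * ((j:ℝ) ^ (-(1/4) : ℝ) * (j':ℝ) ^ (-(1/4) : ℝ))
            = c / 8 * ((Real.sqrt 2 - 1) * ((j':ℝ) ^ (-(1/4) : ℝ) * (j:ℝ) ^ (-(1/4) : ℝ))) := by
              rw [cconst]; ring
          _ ≤ c / 8 * (Real.sqrt j' - Real.sqrt j) :=
              mul_le_mul_of_nonneg_left K2 (by positivity)
          _ ≤ _ := K1
    · obtain ⟨K1, K2⟩ := key j j' hj' hlt
      have habseq : |Real.sqrt j - Real.sqrt j'| = Real.sqrt j - Real.sqrt j' := by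
        rw [abs_of_nonneg]
        have : Real.sqrt (j':ℝ) ≤ Real.sqrt (j:ℝ) :=
          Real.sqrt_le_sqrt (by exact_mod_cast hlt.le)
        linarith
      rw [habseq]
      refine ⟨K1, ?_⟩
      calc (c / (8 * (1 + Real.sqrt 2))) * ((j:ℝ) ^ (-(1/4) : ℝ) * (j':ℝ) ^ (-(1/4) : ℝ))
          = c / 8 * ((Real.sqrt 2 - 1) * ((j:ℝ) ^ (-(1/4) : ℝ) * (j':ℝ) ^ (-(1/4) : ℝ))) := by
            rw [cconst]; ring
        _ ≤ c / 8 * (Real.sqrt j - Real.sqrt j') :=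
            mul_le_mul_of_nonneg_left K2 (by positivity)
        _ ≤ _ := K1
  obtain ⟨G1, G2⟩ := main2
  refine ⟨G1, G2, ?_⟩
  intro d γ hd hγ hγC hcon
  have hj1 : (1:ℝ) ≤ (j:ℝ) := by exact_mod_cast hj
  have hj'1 : (1:ℝ) ≤ (j':ℝ) := by exact_mod_cast hj'
  have hjd : (j:ℝ) ^ (-d) ≤ (j:ℝ) ^ (-(1/4) : ℝ) :=
    Real.rpow_le_rpow_of_exponent_le hj1 (by linarith)
  have hj'd : (j':ℝ) ^ (-d) ≤ (j':ℝ) ^ (-(1/4) : ℝ) :=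
    Real.rpow_le_rpow_of_exponent_le hj'1 (by linarith)
  have hnn1 : (0:ℝ) ≤ (j:ℝ) ^ (-d) := Real.rpow_nonneg (by positivity) _
  have hnn2 : (0:ℝ) ≤ (j':ℝ) ^ (-d) := Real.rpow_nonneg (by positivity) _
  have hstep : 4 * γ * ((j:ℝ) ^ (-d) * (j':ℝ) ^ (-d)) ≤
      (c / (8 * (1 + Real.sqrt 2))) * ((j:ℝ) ^ (-(1/4) : ℝ) * (j':ℝ) ^ (-(1/4) : ℝ)) :=
    mul_le_mul hγC (mul_le_mul hjd hj'd hnn2 (Real.rpow_nonneg (by positivity) _))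
      (mul_nonneg hnn1 hnn2) C2nonneg
  linarith
end

section
/- (Equivalence of the quasi-periodic transport equation and the quasi-periodic characteristic equation.) Let ν ≥ 1, ω ∈ ℝ^ν, let V : ℝ^ν × ℝ → ℝ be continuous, and let β, β̆ : ℝ^ν × ℝ → ℝ be C¹ functions such that for every φ ∈ ℝ^ν the maps x ↦ x + β(φ,x) and y ↦ y + β̆(φ,y) are mutually inverse bijections of ℝ (i.e. y = x + β(φ,x) if and only if x = y + β̆(φ,y), for all x, y ∈ ℝ). Then β solves the transport equation ω·∂_φ β(φ,x) + V(φ,x)·(1 + ∂_x β(φ,x)) = 0 for all (φ,x), if and only if β̆ solves the characteristic equation ω·∂_φ β̆(φ,y) = V(φ, y + β̆(φ,y)) for all (φ,y). -/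
/-!
Differentiating the identity β̆(φ, x + β(φ,x)) = -β(φ,x) in the direction (ω, 0) gives
ω·∂_φ β̆(φ,y) = -(ω·∂_φ β(φ,x)) (1 + ∂_y β̆(φ,y)) at y = x + β(φ,x), and in the direction (0, 1)
gives (1 + ∂_x β(φ,x)) (1 + ∂_y β̆(φ,y)) = 1. The first relation turns the transport equation at x
into the characteristic equation at y, the second is what makes the factor 1 + ∂_x β cancel.
The converse is the first relation with the roles of β and β̆ exchanged.
-/

open Function ContinuousLinearMap

theorem sum_mul_apply_single {ι : Type*} [Fintype ι] [DecidableEq ι] (ω : ι → ℝ)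
    (L : (ι → ℝ) →L[ℝ] ℝ) : ∑ i, ω i * L (Pi.single i 1) = L ω := by
  conv_rhs => rw [pi_eq_sum_univ' ω]
  simp only [map_sum, map_smul, smul_eq_mul]

section

variable {E : Type*} [NormedAddCommGroup E] [NormedSpace ℝ E]

theorem DifferentiableAt.partial_fst {h : E → ℝ → ℝ} {φ : E} {y : ℝ}
    (hd : DifferentiableAt ℝ (uncurry h) (φ, y)) : DifferentiableAt ℝ (fun ψ => h ψ y) φ :=
  hd.comp (f := fun ψ => (ψ, y)) φ (differentiableAt_id.prodMk (differentiableAt_const y))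

theorem DifferentiableAt.partial_snd {h : E → ℝ → ℝ} {φ : E} {y : ℝ}
    (hd : DifferentiableAt ℝ (uncurry h) (φ, y)) : DifferentiableAt ℝ (h φ) y :=
  hd.comp (f := fun t => (φ, t)) y ((differentiableAt_const φ).prodMk differentiableAt_id)

theorem fderiv_uncurry_apply {h : E → ℝ → ℝ} {φ : E} {y : ℝ}
    (hd : DifferentiableAt ℝ (uncurry h) (φ, y)) (v : E) (t : ℝ) :
    fderiv ℝ (uncurry h) (φ, y) (v, t) = fderiv ℝ (fun ψ => h ψ y) φ v + t * deriv (h φ) y := by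
  have hleft : HasFDerivAt (fun ψ => h ψ y) ((fderiv ℝ (uncurry h) (φ, y)).comp (inl ℝ E ℝ)) φ :=
    hd.hasFDerivAt.comp (f := fun ψ => (ψ, y)) φ (hasFDerivAt_prodMk_left φ y)
  have hright : HasFDerivAt (h φ) ((fderiv ℝ (uncurry h) (φ, y)).comp (inr ℝ E ℝ)) y :=
    hd.hasFDerivAt.comp (f := fun t => (φ, t)) y (hasFDerivAt_prodMk_right φ y)
  rw [hleft.fderiv, hright.hasDerivAt.deriv, ← smul_eq_mul, ← map_smul,
    ContinuousLinearMap.comp_apply, ContinuousLinearMap.comp_apply, ← map_add]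
  simp

theorem fderiv_apply_of_shear_inverse {f g : E → ℝ → ℝ}
    (hinv : ∀ ψ t, g ψ (t + f ψ t) = -f ψ t) {φ : E} {x y : ℝ} (hy : x + f φ x = y)
    (hf : DifferentiableAt ℝ (uncurry f) (φ, x)) (hg : DifferentiableAt ℝ (uncurry g) (φ, y))
    (v : E) :
    fderiv ℝ (fun ψ => g ψ y) φ v = -fderiv ℝ (fun ψ => f ψ x) φ v * (1 + deriv (g φ) y) := by
  subst hy
  have hshear : HasFDerivAt (fun ψ => (ψ, x + f ψ x))
      ((ContinuousLinearMap.id ℝ E).prod (fderiv ℝ (fun ψ => f ψ x) φ)) φ :=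
    (hasFDerivAt_id φ).prodMk (hf.partial_fst.hasFDerivAt.const_add x)
  have hcomp := hg.hasFDerivAt.comp (f := fun ψ => (ψ, x + f ψ x)) φ hshear
  rw [show uncurry g ∘ (fun ψ => (ψ, x + f ψ x)) = fun ψ => -f ψ x from funext fun ψ => hinv ψ x]
    at hcomp
  have hv := congrArg (· v) (hcomp.unique hf.partial_fst.hasFDerivAt.neg)
  simp only [ContinuousLinearMap.comp_apply, ContinuousLinearMap.prod_apply,
    ContinuousLinearMap.id_apply, neg_apply, fderiv_uncurry_apply hg] at hv
  linear_combination hv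

theorem deriv_mul_deriv_of_shear_inverse {f g : E → ℝ → ℝ}
    (hinv : ∀ ψ t, g ψ (t + f ψ t) = -f ψ t) {φ : E} {x y : ℝ} (hy : x + f φ x = y)
    (hf : DifferentiableAt ℝ (uncurry f) (φ, x)) (hg : DifferentiableAt ℝ (uncurry g) (φ, y)) :
    (1 + deriv (f φ) x) * (1 + deriv (g φ) y) = 1 := by
  subst hy
  have hcomp : HasDerivAt (fun t => g φ (t + f φ t))
      (deriv (g φ) (x + f φ x) * (1 + deriv (f φ) x)) x :=
    hg.partial_snd.hasDerivAt.comp x ((hasDerivAt_id x).add hf.partial_snd.hasDerivAt)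
  have hneg : HasDerivAt (fun t => g φ (t + f φ t)) (-deriv (f φ) x) x := by
    rw [show (fun t => g φ (t + f φ t)) = fun t => -f φ t from funext (hinv φ)]
    exact hf.partial_snd.hasDerivAt.neg
  linear_combination hcomp.unique hneg

end

theorem transport_iff_characteristic_general (ν : ℕ)
    (ω : Fin ν → ℝ) (V : (Fin ν → ℝ) → ℝ → ℝ)
    (β βinv : (Fin ν → ℝ) → ℝ → ℝ)
    (hβ : ContDiff ℝ 1 fun p : (Fin ν → ℝ) × ℝ => β p.1 p.2)
    (hβinv : ContDiff ℝ 1 fun p : (Fin ν → ℝ) × ℝ => βinv p.1 p.2)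
    (hinv : ∀ (φ : Fin ν → ℝ) (x y : ℝ), y = x + β φ x ↔ x = y + βinv φ y) :
    (∀ (φ : Fin ν → ℝ) (x : ℝ),
        (∑ i, ω i * fderiv ℝ (fun ψ => β ψ x) φ (Pi.single i 1)) +
          V φ x * (1 + deriv (β φ) x) = 0) ↔
    (∀ (φ : Fin ν → ℝ) (y : ℝ),
        (∑ i, ω i * fderiv ℝ (fun ψ => βinv ψ y) φ (Pi.single i 1)) =
          V φ (y + βinv φ y)) := by
  have hβd : Differentiable ℝ (uncurry β) := hβ.differentiable one_ne_zero
  have hβinvd : Differentiable ℝ (uncurry βinv) := hβinv.differentiable one_ne_zero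
  have hβ_βinv : ∀ φ x, βinv φ (x + β φ x) = -β φ x := fun φ x => by
    linarith [(hinv φ x _).1 rfl]
  have hβinv_β : ∀ φ y, β φ (y + βinv φ y) = -βinv φ y := fun φ y => by
    linarith [(hinv φ _ y).2 rfl]
  simp only [sum_mul_apply_single]
  constructor
  · intro htransport φ y
    set x := y + βinv φ y
    have hy : x + β φ x = y := by linarith [hβinv_β φ y]
    rw [fderiv_apply_of_shear_inverse hβ_βinv hy (hβd _) (hβinvd _)]
    linear_combination -(1 + deriv (βinv φ) y) * htransport φ x +
      V φ x * deriv_mul_deriv_of_shear_inverse hβ_βinv hy (hβd _) (hβinvd _)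
  · intro hcharacteristic φ x
    set y := x + β φ x
    have hx : y + βinv φ y = x := by linarith [hβ_βinv φ x]
    rw [fderiv_apply_of_shear_inverse hβinv_β hx (hβinvd _) (hβd _), hcharacteristic, hx]
    ring

/-- Equivalence of the quasi-periodic transport equation for β and the quasi-periodic
characteristic equation for the inverse diffeomorphism β̆: if for every φ the maps
x ↦ x + β(φ,x) and y ↦ y + β̆(φ,y) are mutually inverse, then
ω·∂_φ β + V·(1 + ∂_x β) = 0 holds everywhere iff ω·∂_φ β̆(φ,y) = V(φ, y + β̆(φ,y))
holds everywhere. -/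
theorem transport_iff_characteristic (ν : ℕ) (hν : 1 ≤ ν)
    (ω : Fin ν → ℝ) (V : (Fin ν → ℝ) → ℝ → ℝ)
    (hV : Continuous fun p : (Fin ν → ℝ) × ℝ => V p.1 p.2)
    (β βinv : (Fin ν → ℝ) → ℝ → ℝ)
    (hβ : ContDiff ℝ 1 fun p : (Fin ν → ℝ) × ℝ => β p.1 p.2)
    (hβinv : ContDiff ℝ 1 fun p : (Fin ν → ℝ) × ℝ => βinv p.1 p.2)
    (hinv : ∀ (φ : Fin ν → ℝ) (x y : ℝ), y = x + β φ x ↔ x = y + βinv φ y) :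
    (∀ (φ : Fin ν → ℝ) (x : ℝ),
        (∑ i, ω i * fderiv ℝ (fun ψ => β ψ x) φ (Pi.single i 1)) +
          V φ x * (1 + deriv (β φ) x) = 0) ↔
    (∀ (φ : Fin ν → ℝ) (y : ℝ),
        (∑ i, ω i * fderiv ℝ (fun ψ => βinv ψ y) φ (Pi.single i 1)) =
          V φ (y + βinv φ y)) :=
  transport_iff_characteristic_general ν ω V β βinv hβ hβinv hinv
end
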